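/- arXiv:2007.13167 — 3 statements merged into one kernel-verified Lean document; each statement's English description precedes it below -/
import Mathlib

section
/- The coefficients λ_ℓ(θ) := α_ℓ(θ) + Σ_{m=0}^{ℓ} β_m(θ)/(ℓ-m)! satisfy λ_ℓ(θ) = θ^ℓ/ℓ! + Σ_{j ≥ 1, 2j ≤ ℓ} c_{2j} θ^{ℓ-2j}/(ℓ-2j)! where c_{2j} = 1/((2j+1)! 2^{2j}); in particular λ_0(θ)=1, λ_1(θ)=θ, λ_2(θ)=θ²/2 + 1/24, λ_3(θ)=θ³/6 + θ/24, λ_4(θ)=θ⁴/24 + θ²/48 + 1/1920. -/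
/-! Writing `u = θ - 1/2`, the coefficients are `α_ℓ = ((1/2)^(ℓ+1) - u^(ℓ+1)) / (ℓ+1)!` and
`β_m = (u^(m+1) - (-1/2)^(m+1)) / (m+1)!`, and the binomial theorem sums the convolution
`∑ x^(m+1) / ((m+1)! (ℓ-m)!)` to `((x+1)^(ℓ+1) - 1) / (ℓ+1)!`. Hence
`λ_ℓ(θ) = ((θ + 1/2)^(ℓ+1) - (θ - 1/2)^(ℓ+1)) / (ℓ+1)!`, whose expansion in powers of `θ`
is the stated one. -/

open MeasureTheory intervalIntegral

noncomputable def alphaCoef (l : ℕ) (θ : ℝ) : ℝ :=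
  (1 - (2*θ - 1)^(l+1)) / (2^(l+1) * (Nat.factorial (l+1)))

noncomputable def betaCoef (l : ℕ) (θ : ℝ) : ℝ :=
  ((2*θ - 1)^(l+1) - (-1 : ℝ)^(l+1)) / (2^(l+1) * (Nat.factorial (l+1)))

noncomputable def lambdaCoef (l : ℕ) (θ : ℝ) : ℝ :=
  alphaCoef l θ + ∑ m ∈ Finset.range (l+1), betaCoef m θ / (Nat.factorial (l - m))

open Finset Nat

theorem sum_pow_succ_div_factorial_mul_factorial {K : Type*} [Field K] [CharZero K]
    (x : K) (n : ℕ) :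
    ∑ m ∈ range (n + 1), x ^ (m + 1) / ((m + 1)! * (n - m)!) =
      ((x + 1) ^ (n + 1) - 1) / (n + 1)! := by
  calc ∑ m ∈ range (n + 1), x ^ (m + 1) / ((m + 1)! * (n - m)!)
      = ∑ m ∈ range (n + 1), x ^ (m + 1) * (n + 1).choose (m + 1) / (n + 1)! := by
        refine sum_congr rfl fun m hm => ?_
        have hmn : m + 1 ≤ n + 1 := by simpa using mem_range.1 hm
        rw [Nat.cast_choose K hmn, Nat.add_sub_add_right, mul_div_assoc', div_div,
          mul_div_mul_right _ _ (Nat.cast_ne_zero.2 (factorial_ne_zero _))]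
    _ = ((x + 1) ^ (n + 1) - 1) / (n + 1)! := by
        simp [← sum_div, add_pow, sum_range_succ' _ (n + 1)]

theorem alphaCoef_eq (l : ℕ) (θ : ℝ) :
    alphaCoef l θ = ((1 / 2) ^ (l + 1) - (θ - 1 / 2) ^ (l + 1)) / (l + 1)! := by
  rw [alphaCoef, show θ - 1 / 2 = (2 * θ - 1) / 2 by ring, div_pow, div_pow, one_pow]
  field_simp

theorem betaCoef_eq (m : ℕ) (θ : ℝ) :
    betaCoef m θ = ((θ - 1 / 2) ^ (m + 1) - (-1 / 2) ^ (m + 1)) / (m + 1)! := by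
  rw [betaCoef, show θ - 1 / 2 = (2 * θ - 1) / 2 by ring, div_pow, div_pow]
  field_simp

theorem lambdaCoef_eq (l : ℕ) (θ : ℝ) :
    lambdaCoef l θ = ((θ + 1 / 2) ^ (l + 1) - (θ - 1 / 2) ^ (l + 1)) / (l + 1)! := by
  have hsum : ∑ m ∈ range (l + 1), betaCoef m θ / (l - m)! =
      ∑ m ∈ range (l + 1), (θ - 1 / 2) ^ (m + 1) / ((m + 1)! * (l - m)!) -
        ∑ m ∈ range (l + 1), (-1 / 2 : ℝ) ^ (m + 1) / ((m + 1)! * (l - m)!) := by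
    rw [← sum_sub_distrib]
    refine sum_congr rfl fun m _ => ?_
    rw [betaCoef_eq]
    field_simp
  rw [lambdaCoef, alphaCoef_eq, hsum, sum_pow_succ_div_factorial_mul_factorial,
    sum_pow_succ_div_factorial_mul_factorial]
  ring

theorem lambda_low_order (θ : ℝ) :
    lambdaCoef 0 θ = 1 ∧
    lambdaCoef 1 θ = θ ∧
    lambdaCoef 2 θ = θ^2/2 + 1/24 ∧
    lambdaCoef 3 θ = θ^3/6 + θ/24 ∧
    lambdaCoef 4 θ = θ^4/24 + θ^2/48 + 1/1920 := by
  simp only [lambdaCoef_eq]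
  refine ⟨?_, ?_, ?_, ?_, ?_⟩ <;> norm_num [Nat.factorial] <;> ring
end

section
/- Consistency with Lagrange interpolation (symmetric stencil): let k = 2r be even, and for each i let R_i be the unique polynomial of degree ≤ k whose cell averages over cells i-r,...,i+r equal ū_{i-r},...,ū_{i+r}. Then Q_{i+θ} := (1/Δx)∫_{x_{i-1/2+θ}}^{x_{i+1/2}} R_i + (1/Δx)∫_{x_{i+1/2}}^{x_{i+1/2+θ}} R_{i+1} equals L(x_i + θΔx), where L is the unique polynomial of degree ≤ k+1 with L(x_{i-r+j}) = ū_{i-r+j} for j = 0,...,k+1. One may verify the case k = 2 (r = 1). -/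
open MeasureTheory intervalIntegral

private lemma eval2 (p : Polynomial ℝ) (hp : p.natDegree ≤ 2) (x : ℝ) :
    p.eval x = p.coeff 0 + p.coeff 1 * x + p.coeff 2 * x^2 := by
  rw [Polynomial.eval_eq_sum_range' (n := 3) (lt_of_le_of_lt hp (by norm_num))]
  simp [Finset.sum_range_succ]

private lemma eval3 (p : Polynomial ℝ) (hp : p.natDegree ≤ 3) (x : ℝ) :
    p.eval x = p.coeff 0 + p.coeff 1 * x + p.coeff 2 * x^2 + p.coeff 3 * x^3 := by
  rw [Polynomial.eval_eq_sum_range' (n := 4) (lt_of_le_of_lt hp (by norm_num))]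
  simp [Finset.sum_range_succ]

private lemma integ (c0 c1 c2 a b : ℝ) :
    (∫ x in a..b, (c0 + c1*x + c2*x^2)) =
      c0*(b-a) + c1*(b^2-a^2)/2 + c2*(b^3-a^3)/3 := by
  have hderiv : ∀ x ∈ Set.uIcc a b,
      HasDerivAt (fun x : ℝ => c0*x + c1*(x^2/2) + c2*(x^3/3))
        (c0 + c1*x + c2*x^2) x := by
    intro x _
    have H : HasDerivAt (fun x : ℝ => c0*x + (c1*(x^2/2) + c2*(x^3/3)))
        (c0*1 + (c1*(((2:ℕ))*x^(2-1)/2) + c2*(((3:ℕ))*x^(3-1)/3))) x :=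
      ((hasDerivAt_id x).const_mul c0).add
        ((((hasDerivAt_pow 2 x).div_const 2).const_mul c1).add
          (((hasDerivAt_pow 3 x).div_const 3).const_mul c2))
    convert H using 1
    · ext y; ring
    · push_cast; ring
  rw [intervalIntegral.integral_eq_sub_of_hasDerivAt hderiv
      (Continuous.intervalIntegrable (by continuity) a b)]
  ring

theorem lagrange_consistency_k2 (Δx : ℝ) (hΔx : 0 < Δx) (ubar : ℤ → ℝ) (i : ℤ)
    (θ : ℝ) (h0 : 0 ≤ θ) (h1 : θ < 1)
    (Ri Rip1 L : Polynomial ℝ)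
    (hRideg : Ri.natDegree ≤ 2) (hRip1deg : Rip1.natDegree ≤ 2) (hLdeg : L.natDegree ≤ 3)
    (hRi : ∀ j : ℤ, -1 ≤ j → j ≤ 1 →
      (1/Δx) * ∫ x in (((i:ℝ)+(j:ℝ))*Δx - Δx/2)..(((i:ℝ)+(j:ℝ))*Δx + Δx/2),
        Ri.eval x = ubar (i+j))
    (hRip1 : ∀ j : ℤ, -1 ≤ j → j ≤ 1 →
      (1/Δx) * ∫ x in (((i:ℝ)+1+(j:ℝ))*Δx - Δx/2)..(((i:ℝ)+1+(j:ℝ))*Δx + Δx/2),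
        Rip1.eval x = ubar (i+1+j))
    (hL : ∀ j : ℤ, 0 ≤ j → j ≤ 3 →
      L.eval (((i:ℝ)-1+(j:ℝ))*Δx) = ubar (i-1+j)) :
    (1/Δx) * (∫ x in ((i:ℝ)*Δx - Δx/2 + θ*Δx)..((i:ℝ)*Δx + Δx/2), Ri.eval x)
    + (1/Δx) * (∫ x in ((i:ℝ)*Δx + Δx/2)..((i:ℝ)*Δx + Δx/2 + θ*Δx), Rip1.eval x)
    = L.eval ((i:ℝ)*Δx + θ*Δx) := by
  have hne : Δx ≠ 0 := ne_of_gt hΔx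
  -- clean the interpolation hypotheses
  have eAm1 := hRi (-1) (by norm_num) (by norm_num)
  have eA0 := hRi 0 (by norm_num) (by norm_num)
  have eA1 := hRi 1 (by norm_num) (by norm_num)
  have eBm1 := hRip1 (-1) (by norm_num) (by norm_num)
  have eB0 := hRip1 0 (by norm_num) (by norm_num)
  have eB1 := hRip1 1 (by norm_num) (by norm_num)
  have eL0 := hL 0 (by norm_num) (by norm_num)
  have eL1 := hL 1 (by norm_num) (by norm_num)
  have eL2 := hL 2 (by norm_num) (by norm_num)
  have eL3 := hL 3 (by norm_num) (by norm_num)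
  -- normalize integer indices of ubar
  have n1 : i + (-1) = i - 1 := by ring
  have n2 : i + (0:ℤ) = i := by ring
  have n3 : i + 1 + (-1) = i := by ring
  have n4 : i + 1 + (0:ℤ) = i + 1 := by ring
  have n5 : i + 1 + (1:ℤ) = i + 2 := by ring
  have n6 : i - 1 + (0:ℤ) = i - 1 := by ring
  have n7 : i - 1 + (1:ℤ) = i := by ring
  have n8 : i - 1 + (2:ℤ) = i + 1 := by ring
  have n9 : i - 1 + (3:ℤ) = i + 2 := by ring
  rw [n1] at eAm1; rw [n2] at eA0; rw [n3] at eBm1; rw [n4] at eB0; rw [n5] at eB1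
  rw [n6] at eL0; rw [n7] at eL1; rw [n8] at eL2; rw [n9] at eL3
  -- expand polynomial evaluations and integrals
  simp only [eval2 Ri hRideg, eval2 Rip1 hRip1deg, eval3 L hLdeg, integ,
    Int.cast_neg, Int.cast_one, Int.cast_zero, Int.cast_ofNat, Int.cast_two,
    Int.cast_three] at eAm1 eA0 eA1 eBm1 eB0 eB1 eL0 eL1 eL2 eL3 ⊢
  rw [one_div, inv_mul_eq_div, div_eq_iff hne] at eAm1 eA0 eA1 eBm1 eB0 eB1
  rw [← mul_add, one_div, inv_mul_eq_div, div_eq_iff hne]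
  linear_combination (-(θ*(θ-1)*(θ-2))/6) * eAm1
    + (1 - 5*θ/6 - θ^2/2 + θ^3/3) * eA0
    + (θ*(1-θ^2)/6) * eA1
    + (θ*(θ-1)*(θ-2)/6) * eBm1
    + (-θ^3/3 + θ^2/2 + 5*θ/6) * eB0
    + ((θ^3-θ)/6) * eB1
    + (Δx*(θ*(θ-1)*(θ-2)/6)) * eL0
    + (-(Δx*((θ+1)*(θ-1)*(θ-2)/2))) * eL1
    + (Δx*((θ+1)*θ*(θ-2)/2)) * eL2
    + (-(Δx*((θ+1)*θ*(θ-1)/6))) * eL3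
end

section
/- Solvability of the implicit stage for the Broadwell model: given F, G, H ∈ ℝ and μ = aΔt/κ > 0 with G + 2H + F + 1/μ ≠ 0, the unique solution (f, g, h) of the system f = F + μQ, g = G + μQ, h = H - μQ with Q = h² - fg satisfying f + h = F + H and g + h = G + H is given by h = (μ(H+F)(H+G) + H)/(μ(G + 2H + F) + 1), f = H + F - h, g = H + G - h. -/
/-!
Both conservation laws let one eliminate `f = H + F - h` and `g = H + G - h`. The collision
term then becomes affine in `h`, `h² - f g = h (G + 2H + F) - (H + F)(H + G)`, so the equation
for `h` is the linear equation `h (μ (G + 2H + F) + 1) = μ (H + F)(H + G) + H`, whose coefficient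
is `μ (G + 2H + F + 1/μ) ≠ 0`. The equations for `f` and `g` then follow from the one for `h`.
-/

section Field

variable {K : Type*} [Field K]

lemma mul_add_one_ne_zero_of_add_one_div_ne_zero {μ s : K} (h : s + 1 / μ ≠ 0) :
    μ * s + 1 ≠ 0 := by
  rcases eq_or_ne μ 0 with rfl | hμ
  · simp
  · rwa [← mul_one_div_cancel hμ, ← mul_add, mul_ne_zero_iff, and_iff_right hμ]

lemma broadwell_collision_of_conserved (F G H h : K) :
    h ^ 2 - (H + F - h) * (H + G - h) = h * (G + 2 * H + F) - (H + F) * (H + G) := by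
  ring

lemma broadwell_implicit_eq_iff {μ F G H : K} (hd : μ * (G + 2 * H + F) + 1 ≠ 0) (h : K) :
    h = H - μ * (h ^ 2 - (H + F - h) * (H + G - h)) ↔
      h = (μ * (H + F) * (H + G) + H) / (μ * (G + 2 * H + F) + 1) := by
  rw [eq_div_iff hd, broadwell_collision_of_conserved]
  constructor <;> intro e <;> linear_combination e

end Field

theorem broadwell_implicit_stage_solvable_general (μ F G H : ℝ)
    (hden : G + 2*H + F + 1/μ ≠ 0) :
    let h0 := (μ*(H+F)*(H+G) + H) / (μ*(G + 2*H + F) + 1)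
    let f0 := H + F - h0
    let g0 := H + G - h0
    (f0 = F + μ*(h0^2 - f0*g0) ∧ g0 = G + μ*(h0^2 - f0*g0) ∧
      h0 = H - μ*(h0^2 - f0*g0)) ∧
    ∀ f g h : ℝ,
      f = F + μ*(h^2 - f*g) → g = G + μ*(h^2 - f*g) → h = H - μ*(h^2 - f*g) →
      f + h = F + H → g + h = G + H →
      f = f0 ∧ g = g0 ∧ h = h0 := by
  intro h0 f0 g0
  have key := broadwell_implicit_eq_iff (mul_add_one_ne_zero_of_add_one_div_ne_zero hden)
  have hh0 : h0 = H - μ * (h0 ^ 2 - f0 * g0) := (key h0).2 rfl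
  refine ⟨⟨by linear_combination -hh0, by linear_combination -hh0, hh0⟩, ?_⟩
  intro f g h _ _ hh hfh hgh
  obtain rfl : f = H + F - h := by linear_combination hfh
  obtain rfl : g = H + G - h := by linear_combination hgh
  obtain rfl := (key h).1 hh
  exact ⟨rfl, rfl, rfl⟩

theorem broadwell_implicit_stage_solvable (μ F G H : ℝ) (hμ : 0 < μ)
    (hden : G + 2*H + F + 1/μ ≠ 0) :
    let h0 := (μ*(H+F)*(H+G) + H) / (μ*(G + 2*H + F) + 1)
    let f0 := H + F - h0
    let g0 := H + G - h0
    (f0 = F + μ*(h0^2 - f0*g0) ∧ g0 = G + μ*(h0^2 - f0*g0) ∧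
      h0 = H - μ*(h0^2 - f0*g0)) ∧
    ∀ f g h : ℝ,
      f = F + μ*(h^2 - f*g) → g = G + μ*(h^2 - f*g) → h = H - μ*(h^2 - f*g) →
      f + h = F + H → g + h = G + H →
      f = f0 ∧ g = g0 ∧ h = h0 :=
  broadwell_implicit_stage_solvable_general μ F G H hden
end
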